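/- arXiv:1611.07875 — 2 statements merged into one kernel-verified Lean document; each statement's English description precedes it below -/
import Mathlib

section
/- Let Γ ⊆ ℝ² be a compact arcwise connected set with H¹(Γ) < ∞. For every ρ > 0, the Lebesgue measure of the closed ρ-neighborhood {x ∈ ℝ² : dist(x,Γ) ≤ ρ} is at most max{ 20π·H¹(Γ)·ρ , 4π·ρ² }. -/
open MeasureTheory Set Metric
open scoped ENNReal Topology

abbrev E2 := EuclideanSpace ℝ (Fin 2)

/-!
A maximal `ρ`-separated subset `N` of `Γ` is a `ρ`-net of `Γ`, so the `ρ`-neighbourhood of `Γ` is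
covered by the balls of radius `2ρ` centred at `N`, of total area at most `#N · 4πρ²`.
If `#N ≥ 2`, every `x ∈ N` has a point of `Γ` at distance `> ρ`; by connectedness, `dist x` maps
`Γ ∩ B̄(x, ρ/2)` onto `[0, ρ/2]`, so this piece has `H¹ ≥ ρ/2`. These pieces are disjoint, whence
`#N · ρ ≤ 2 H¹(Γ)`, and the area is at most `max (4πρ²) (8π H¹(Γ) ρ)`.
-/

open scoped NNReal
open Function

section HausdorffMeasure

variable {X : Type*} [MetricSpace X] [MeasurableSpace X] [BorelSpace X] {Γ : Set X}

theorem IsPreconnected.ofReal_le_hausdorffMeasure_inter_closedBall (hΓ : IsPreconnected Γ)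
    {x y : X} (hx : x ∈ Γ) (hy : y ∈ Γ) {r : ℝ} (hr : r ≤ dist x y) :
    ENNReal.ofReal r ≤ μH[1] (Γ ∩ closedBall x r) := by
  have hlip : LipschitzWith 1 (dist x) := LipschitzWith.dist_right x
  have hsub : Icc 0 r ⊆ dist x '' (Γ ∩ closedBall x r) := by
    intro c hc
    obtain ⟨z, hz, rfl⟩ : c ∈ dist x '' Γ :=
      (hΓ.image _ hlip.continuous.continuousOn).Icc_subset ⟨x, hx, dist_self x⟩ ⟨y, hy, rfl⟩
        ⟨hc.1, hc.2.trans hr⟩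
    exact ⟨z, ⟨hz, by simpa [dist_comm] using hc.2⟩, rfl⟩
  calc ENNReal.ofReal r = μH[1] (Icc (0 : ℝ) r) := by
        rw [hausdorffMeasure_real, Real.volume_Icc, sub_zero]
    _ ≤ μH[1] (dist x '' (Γ ∩ closedBall x r)) := measure_mono hsub
    _ ≤ μH[1] (Γ ∩ closedBall x r) := by
        simpa using hlip.hausdorffMeasure_image_le zero_le_one (Γ ∩ closedBall x r)

theorem IsPreconnected.encard_mul_le_two_mul_hausdorffMeasure (hΓ : IsPreconnected Γ)
    {ε : ℝ≥0} {C : Set X} (hCΓ : C ⊆ Γ) (hC : IsSeparated ε C) (hCnt : C.Nontrivial) :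
    (C.encard : ℝ≥0∞) * ε ≤ 2 * μH[1] Γ := by
  have hsep : ∀ x ∈ C, ∀ y ∈ C, x ≠ y → (ε : ℝ) < dist x y := fun x hx y hy hxy ↦ by
    have : (ε : ℝ≥0∞) < edist x y := hC hx hy hxy
    rw [edist_nndist, ENNReal.coe_lt_coe] at this
    exact_mod_cast this
  have hdisj : Pairwise (Disjoint on fun x : C ↦ closedBall (x : X) (ε / 2)) := fun x y hxy ↦
    closedBall_disjoint_closedBall <| by
      linarith [hsep x x.2 y y.2 (Subtype.coe_ne_coe.2 hxy)]
  have hhalf : ∀ x : C,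
      ENNReal.ofReal (ε / 2) ≤ μH[1].restrict Γ (closedBall (x : X) (ε / 2)) := by
    intro x
    obtain ⟨y, hy, hyx⟩ := hCnt.exists_ne x
    rw [Measure.restrict_apply measurableSet_closedBall, inter_comm]
    refine hΓ.ofReal_le_hausdorffMeasure_inter_closedBall (hCΓ x.2) (hCΓ hy) ?_
    linarith [hsep x x.2 y hy hyx.symm, ε.2]
  calc C.encard * (ε : ℝ≥0∞) = 2 * ∑' _ : C, ENNReal.ofReal (ε / 2) := by
        rw [ENNReal.tsum_set_const, ENNReal.ofReal_div_of_pos two_pos, ENNReal.ofReal_coe_nnreal,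
          ENNReal.ofReal_ofNat, mul_left_comm,
          ENNReal.mul_div_cancel two_ne_zero ENNReal.ofNat_ne_top]
    _ ≤ 2 * ∑' x : C, μH[1].restrict Γ (closedBall (x : X) (ε / 2)) := by
        gcongr with x
        exact hhalf x
    _ ≤ 2 * μH[1].restrict Γ (⋃ x : C, closedBall (x : X) (ε / 2)) := by
        gcongr
        exact tsum_meas_le_meas_iUnion_of_disjoint _ (fun _ ↦ measurableSet_closedBall) hdisj
    _ ≤ 2 * μH[1] Γ := by
        grw [subset_univ (⋃ x : C, _), Measure.restrict_apply_univ]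

theorem IsPreconnected.packingNumber_mul_le (hΓ : IsPreconnected Γ) (ε : ℝ≥0) :
    (packingNumber ε Γ : ℝ≥0∞) * ε ≤ max (ε : ℝ≥0∞) (2 * μH[1] Γ) := by
  simp only [packingNumber, ENat.toENNReal_iSup, ENNReal.iSup_mul, iSup_le_iff]
  intro C hCΓ hC
  rcases C.subsingleton_or_nontrivial with hCs | hCnt
  · refine le_max_of_le_left (mul_le_of_le_one_left' ?_)
    exact_mod_cast encard_le_one_iff_subsingleton.2 hCs
  · exact le_max_of_le_right (hΓ.encard_mul_le_two_mul_hausdorffMeasure hCΓ hC hCnt)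

theorem IsPreconnected.packingNumber_ne_top (hΓ : IsPreconnected Γ) {ε : ℝ≥0} (hε : ε ≠ 0)
    (hΓfin : μH[1] Γ ≠ ⊤) : packingNumber ε Γ ≠ ⊤ := by
  intro htop
  have hpack := hΓ.packingNumber_mul_le ε
  rw [htop, ENat.toENNReal_top, ENNReal.top_mul (ENNReal.coe_ne_zero.2 hε), top_le_iff,
    max_eq_top] at hpack
  exact hpack.elim ENNReal.coe_ne_top (ENNReal.mul_ne_top ENNReal.ofNat_ne_top hΓfin)

end HausdorffMeasure

theorem Metric.IsCover.setOf_infDist_le_subset_biUnion_closedBall {X : Type*} [MetricSpace X]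
    {ε : ℝ≥0} {Γ N : Set X} (hN : IsCover ε Γ N) (hΓ : IsCompact Γ) (hne : Γ.Nonempty) (δ : ℝ) :
    {x | infDist x Γ ≤ δ} ⊆ ⋃ y ∈ N, closedBall y (δ + ε) := by
  intro x hx
  obtain ⟨y, hyΓ, hxy⟩ := hΓ.exists_infDist_eq_dist hne x
  obtain ⟨z, hzN, hyz⟩ := mem_iUnion₂.1 (hN.subset_iUnion_closedBall hyΓ)
  refine mem_iUnion₂.2 ⟨z, hzN, ?_⟩
  calc dist x z ≤ dist x y + dist y z := dist_triangle x y z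
    _ ≤ δ + ε := add_le_add (hxy ▸ hx) hyz

theorem measure_biUnion_closedBall_le {E : Type*} [NormedAddCommGroup E] [MeasurableSpace E]
    [BorelSpace E] (μ : Measure E) [μ.IsAddHaarMeasure] {N : Set E} (hN : N.Countable) (r : ℝ) :
    μ (⋃ y ∈ N, closedBall y r) ≤ N.encard * μ (closedBall 0 r) :=
  calc μ (⋃ y ∈ N, closedBall y r) ≤ ∑' y : N, μ (closedBall (y : E) r) :=
        measure_biUnion_le μ hN _
    _ = N.encard * μ (closedBall 0 r) := by
        simp only [Measure.addHaar_closedBall_center, ENNReal.tsum_set_const]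

theorem measure_setOf_infDist_le_le_packingNumber_mul {E : Type*} [NormedAddCommGroup E]
    [MeasurableSpace E] [BorelSpace E] (μ : Measure E) [μ.IsAddHaarMeasure] {Γ : Set E}
    (hΓ : IsCompact Γ) (hne : Γ.Nonempty) {ε : ℝ≥0} (hfin : packingNumber ε Γ ≠ ⊤) :
    μ {x | infDist x Γ ≤ ε} ≤ packingNumber ε Γ * μ (closedBall 0 (2 * ε)) := by
  have hN : (maximalSeparatedSet ε Γ).Finite := by
    rw [← Set.encard_ne_top_iff, encard_maximalSeparatedSet hfin]
    exact_mod_cast hfin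
  calc μ {x | infDist x Γ ≤ ε} ≤ μ (⋃ y ∈ maximalSeparatedSet ε Γ, closedBall y (2 * ε)) := by
        rw [two_mul]
        exact measure_mono <|
          (isCover_maximalSeparatedSet hfin).setOf_infDist_le_subset_biUnion_closedBall hΓ hne ε
    _ ≤ packingNumber ε Γ * μ (closedBall 0 (2 * ε)) := by
        rw [← encard_maximalSeparatedSet hfin]
        exact measure_biUnion_closedBall_le μ hN.countable _

theorem mul_volume_closedBall_two_mul_le {P m : ℝ≥0∞} {ρ : ℝ} (hρ : 0 < ρ) (hm : m ≠ ⊤)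
    (hP : P * ENNReal.ofReal ρ ≤ max (ENNReal.ofReal ρ) (2 * m)) :
    P * volume (closedBall (0 : E2) (2 * ρ)) ≤
      ENNReal.ofReal (max (20 * Real.pi * m.toReal * ρ) (4 * Real.pi * ρ ^ 2)) := by
  have hPtop : P ≠ ⊤ := by
    rintro rfl
    rw [ENNReal.top_mul (by simpa using hρ), top_le_iff, max_eq_top] at hP
    exact hP.elim ENNReal.ofReal_ne_top (ENNReal.mul_ne_top ENNReal.ofNat_ne_top hm)
  lift P to ℝ≥0 using hPtop
  rw [← ENNReal.ofReal_toReal hm, ← ENNReal.ofReal_coe_nnreal, ← ENNReal.ofReal_mul P.coe_nonneg,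
    ← ENNReal.ofReal_ofNat, ← ENNReal.ofReal_mul zero_le_two, ← ENNReal.ofReal_max,
    ENNReal.ofReal_le_ofReal_iff (le_max_of_le_left hρ.le)] at hP
  rw [EuclideanSpace.volume_closedBall_fin_two, ← ENNReal.ofReal_coe_nnreal,
    ← ENNReal.ofReal_pow (by positivity), ← ENNReal.ofReal_mul (by positivity),
    ← ENNReal.ofReal_mul P.coe_nonneg]
  refine ENNReal.ofReal_le_ofReal ?_
  have hm' : 0 ≤ m.toReal := ENNReal.toReal_nonneg
  calc (P : ℝ) * ((2 * ρ) ^ 2 * Real.pi) = P * ρ * (4 * Real.pi * ρ) := by ring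
    _ ≤ max ρ (2 * m.toReal) * (4 * Real.pi * ρ) := by gcongr
    _ = max (4 * Real.pi * ρ ^ 2) (8 * Real.pi * m.toReal * ρ) := by
        rw [max_mul_of_nonneg _ _ (by positivity)]; ring_nf
    _ ≤ max (20 * Real.pi * m.toReal * ρ) (4 * Real.pi * ρ ^ 2) := by
        rw [max_comm]; gcongr; norm_num

theorem stmt_4 (Γ : Set E2) (hΓc : IsCompact Γ) (hΓpc : IsPathConnected Γ)
    (hΓfin : μH[1] Γ < ⊤) (ρ : ℝ) (hρ : 0 < ρ) :
    volume {x : E2 | Metric.infDist x Γ ≤ ρ} ≤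
      ENNReal.ofReal (max (20 * Real.pi * (μH[1] Γ).toReal * ρ) (4 * Real.pi * ρ ^ 2)) := by
  lift ρ to ℝ≥0 using hρ.le
  have hΓ : IsPreconnected Γ := hΓpc.isConnected.isPreconnected
  calc volume {x : E2 | infDist x Γ ≤ ρ}
      ≤ packingNumber ρ Γ * volume (closedBall (0 : E2) (2 * ρ)) :=
        measure_setOf_infDist_le_le_packingNumber_mul volume hΓc hΓpc.nonempty
          (hΓ.packingNumber_ne_top (by exact_mod_cast hρ.ne') hΓfin.ne)
    _ ≤ _ := mul_volume_closedBall_two_mul_le hρ hΓfin.ne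
        (by simpa using hΓ.packingNumber_mul_le ρ)
end

section
/- Let Ω ⊆ ℝ² be bounded open, ε ∈ (0,1), and let u ∈ C²(B(x₀,R)) satisfy −Δu = (1/(4ε²))(1−u) in B(x₀,R) ⊆ Ω with 0 ≤ u ≤ 1. Then there is a universal constant C such that |∇u(x₀)| ≤ C·(1/ε + 1/R). -/
open MeasureTheory Set Metric
open scoped ENNReal Topology

noncomputable section

/-- The Laplacian of a real-valued function on the plane. -/
def lap (f : E2 → ℝ) (x : E2) : ℝ :=
  ∑ i : Fin 2, fderiv ℝ (fderiv ℝ f) x (EuclideanSpace.single i 1) (EuclideanSpace.single i 1)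

/-!
With `v := u`, the equation reads `Δv = F(v)` for the nondecreasing `F t = (t - 1)/(4ε²)`. Along a
unit direction `e`, compare `w x = v x - v (σ x)`, where `σ` is the reflection in the hyperplane
through `x₀` orthogonal to `e`, with the barrier `φ x = (M/d²) (|x - x₀|² + (n + 1) t (d - t))`,
`t = ⟪x - x₀, e⟫`, `n` the dimension, on the half ball `{|x - x₀| ≤ d, t ≥ 0}`, `M` being the
oscillation of `v`. On the flat side `w = 0`, on the round side `φ ≥ M ≥ w`, and
`Δφ = -2M/d² < 0`, while `Δw = F(v x) - F(v (σ x)) ≥ 0` wherever `w > 0`; so `w - φ` has no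
positive interior maximum and `w ≤ φ`. Since `w(x₀ + s e) ≈ 2 s ∂ₑv(x₀)` and
`φ(x₀ + s e) ≈ (n + 1) M s / d`, this gives `∂ₑv(x₀) ≤ (n + 1) M / (2d)`, a bound that does not
depend on `ε`; here `n = 2`, `M = 1` and `d = R/2` give `|∇u(x₀)| ≤ 3/R`.
-/

open Filter Module InnerProductSpace Laplacian

section Calculus

variable {E F : Type*} [NormedAddCommGroup E] [NormedSpace ℝ E] [NormedAddCommGroup F]
  [NormedSpace ℝ F]

theorem deriv_deriv_quadratic (α β γ t : ℝ) :
    deriv (deriv fun s : ℝ => α + β * s + γ * s ^ 2) t = 2 * γ := by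
  have : deriv (fun s : ℝ => α + β * s + γ * s ^ 2) = fun s => β + 2 * γ * s := by
    funext s
    exact ((((hasDerivAt_id s).const_mul β).const_add α).add
      ((hasDerivAt_pow 2 s).const_mul γ)).deriv.trans (by simp; ring)
  rw [this]
  exact (((hasDerivAt_id t).const_mul (2 * γ)).const_add β).deriv.trans (by simp)

theorem IsLocalMax.deriv_deriv_nonpos {g : ℝ → ℝ} {t : ℝ} (hmax : IsLocalMax g t)
    (hg : ContinuousAt g t) : deriv (deriv g) t ≤ 0 := by
  by_contra! hpos
  have hmin := isLocalMin_of_deriv_deriv_pos hpos hmax.deriv_eq_zero hg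
  have hconst : g =ᶠ[𝓝 t] fun _ => g t := by
    filter_upwards [hmax, hmin] with s h₁ h₂ using le_antisymm h₁ h₂
  have hderiv : deriv g =ᶠ[𝓝 t] fun _ => 0 := by
    filter_upwards [hconst.eventuallyEq_nhds] with s hs
    rw [hs.deriv_eq, deriv_const]
  rw [hderiv.deriv_eq, deriv_const] at hpos
  exact lt_irrefl _ hpos

theorem HasDerivAt.le_of_le_mul {h g : ℝ → ℝ} {a α : ℝ} (hh : HasDerivAt h a 0) (h0 : h 0 = 0)
    (hle : ∀ᶠ s in 𝓝[>] 0, h s ≤ s * g s) (hg : Tendsto g (𝓝[>] 0) (𝓝 α)) : a ≤ α := by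
  have hslope : Tendsto (fun s => h s / s) (𝓝[>] 0) (𝓝 a) := by
    refine ((hasDerivAt_iff_tendsto_slope.mp hh).mono_left (nhdsGT_le_nhdsNE 0)).congr fun s => ?_
    simp [slope_def_field, h0]
  refine le_of_tendsto_of_tendsto hslope hg ?_
  filter_upwards [hle, self_mem_nhdsWithin] with s hs (hs0 : 0 < s)
  rwa [div_le_iff₀ hs0, mul_comm]

theorem hasDerivAt_comp_add_smul {f : E → F} {z : E} (hf : DifferentiableAt ℝ f z) (b : E) :
    HasDerivAt (fun s : ℝ => f (z + s • b)) (fderiv ℝ f z b) 0 := by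
  have hline : HasDerivAt (fun s : ℝ => z + s • b) b 0 := by
    simpa using ((hasDerivAt_id (0 : ℝ)).smul_const b).const_add z
  exact (by simpa using hf.hasFDerivAt : HasFDerivAt f (fderiv ℝ f z) (z + (0 : ℝ) • b))
    |>.comp_hasDerivAt 0 hline

theorem ContDiffAt.deriv_deriv_comp_add_smul {f : E → F} {z : E} (hf : ContDiffAt ℝ 2 f z)
    (b : E) : deriv (deriv fun s : ℝ => f (z + s • b)) 0 = fderiv ℝ (fderiv ℝ f) z b b := by
  have hline : ∀ s : ℝ, HasDerivAt (fun s : ℝ => z + s • b) b s := fun s => by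
    simpa using ((hasDerivAt_id s).smul_const b).const_add z
  have hline_tendsto : Tendsto (fun s : ℝ => z + s • b) (𝓝 0) (𝓝 z) := by
    simpa using (hline 0).continuousAt.tendsto
  have hdiff : ∀ᶠ y in 𝓝 z, DifferentiableAt ℝ f y :=
    (hf.eventually (by simp)).mono fun y hy => hy.differentiableAt two_ne_zero
  have hderiv : deriv (fun s : ℝ => f (z + s • b)) =ᶠ[𝓝 0]
      fun s => fderiv ℝ f (z + s • b) b := by
    filter_upwards [hline_tendsto.eventually hdiff] with s hs
    exact (hs.hasFDerivAt.comp_hasDerivAt s (hline s)).deriv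
  have hf' : DifferentiableAt ℝ (fderiv ℝ f) z :=
    (hf.fderiv_right (m := 1) (by norm_num)).differentiableAt one_ne_zero
  rw [hderiv.deriv_eq]
  exact (hasDerivAt_comp_add_smul hf' b).clm_apply (hasDerivAt_const 0 b) |>.deriv.trans (by simp)

end Calculus

section Laplacian

variable {E F : Type*} [NormedAddCommGroup E] [InnerProductSpace ℝ E] [FiniteDimensional ℝ E]
  [NormedAddCommGroup F] [NormedSpace ℝ F]

theorem laplacian_eq_sum_fderiv_fderiv {ι : Type*} [Fintype ι] (b : OrthonormalBasis ι ℝ E)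
    (f : E → F) (x : E) : Δ f x = ∑ i, fderiv ℝ (fderiv ℝ f) x (b i) (b i) := by
  simp [laplacian_eq_iteratedFDeriv_orthonormalBasis f b, iteratedFDeriv_two_apply]

theorem laplacian_comp_linearIsometryEquiv (f : E → F) (L : E ≃ₗᵢ[ℝ] E) (x : E) :
    Δ (f ∘ L) x = Δ f (L x) := by
  have hcomp : iteratedFDeriv ℝ 2 (f ∘ L) x =
      (iteratedFDeriv ℝ 2 f (L x)).compContinuousLinearMap fun _ => (L : E →L[ℝ] E) := by
    simpa [iteratedFDerivWithin_univ] using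
      L.toContinuousLinearEquiv.iteratedFDerivWithin_comp_right f uniqueDiffOn_univ
        (mem_univ (L x)) 2
  let b := stdOrthonormalBasis ℝ E
  rw [laplacian_eq_iteratedFDeriv_orthonormalBasis f (b.map L),
    laplacian_eq_iteratedFDeriv_orthonormalBasis _ b]
  simp only [hcomp, ContinuousMultilinearMap.compContinuousLinearMap_apply,
    OrthonormalBasis.map_apply]
  refine Finset.sum_congr rfl fun i _ => congrArg _ (funext fun j => ?_)
  fin_cases j <;> rfl

theorem laplacian_comp_add_right (f : E → F) (a x : E) :
    Δ (fun y => f (y + a)) x = Δ f (x + a) := by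
  simp [laplacian_eq_iteratedFDeriv_orthonormalBasis _ (stdOrthonormalBasis ℝ E),
    iteratedFDeriv_comp_add_right]

theorem laplacian_comp_isometry_about (f : E → F) (L : E ≃ₗᵢ[ℝ] E) (x₀ x : E) :
    Δ (fun y => f (x₀ + L (y - x₀))) x = Δ f (x₀ + L (x - x₀)) := by
  have hsplit : (fun y => f (x₀ + L (y - x₀))) = (fun z => f (z + (x₀ - L x₀))) ∘ L := by
    funext y
    rw [Function.comp_apply, map_sub, add_sub_left_comm]
  rw [hsplit, laplacian_comp_linearIsometryEquiv, laplacian_comp_add_right, map_sub,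
    add_sub_left_comm]

theorem laplacian_sub_comp_isometry_about {v : E → F} (L : E ≃ₗᵢ[ℝ] E) {x₀ y : E}
    (hy : ContDiffAt ℝ 2 v y) (hLy : ContDiffAt ℝ 2 v (x₀ + L (y - x₀))) :
    Δ (fun x => v x - v (x₀ + L (x - x₀))) y = Δ v y - Δ v (x₀ + L (y - x₀)) := by
  have hσ : ContDiffAt ℝ 2 (fun x => x₀ + L (x - x₀)) y := by fun_prop
  rw [← laplacian_comp_isometry_about]
  exact hy.laplacian_sub (f₂ := fun x => v (x₀ + L (x - x₀))) (hLy.comp y hσ)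

theorem IsLocalMax.laplacian_nonpos {f : E → ℝ} {z : E} (hmax : IsLocalMax f z)
    (hf : ContDiffAt ℝ 2 f z) : Δ f z ≤ 0 := by
  rw [laplacian_eq_sum_fderiv_fderiv (stdOrthonormalBasis ℝ E)]
  refine Finset.sum_nonpos fun i _ => ?_
  rw [← hf.deriv_deriv_comp_add_smul]
  have hline : ContinuousAt (fun s : ℝ => z + s • stdOrthonormalBasis ℝ E i) 0 := by fun_prop
  refine IsLocalMax.deriv_deriv_nonpos ?_ ?_
  · exact IsLocalMax.comp_continuous (by simpa using hmax) hline
  · exact ContinuousAt.comp (by simpa using hf.continuousAt) hline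

theorem IsCompact.nonpos_of_laplacian_pos {ψ : E → ℝ} {K U : Set E} (hK : IsCompact K)
    (hU : IsOpen U) (hUK : U ⊆ K) (hψK : ContinuousOn ψ K) (hψU : ∀ x ∈ U, ContDiffAt ℝ 2 ψ x)
    (hbdry : ∀ x ∈ K \ U, ψ x ≤ 0) (hΔ : ∀ x ∈ U, 0 < ψ x → 0 < Δ ψ x) :
    ∀ x ∈ K, ψ x ≤ 0 := by
  intro x hx
  obtain ⟨z, hzK, hzmax⟩ := hK.exists_isMaxOn ⟨x, hx⟩ hψK
  by_contra! hpos
  have hz_pos : 0 < ψ z := hpos.trans_le (hzmax hx)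
  have hzU : z ∈ U := by
    by_contra hzU
    exact (hbdry z ⟨hzK, hzU⟩).not_gt hz_pos
  have hloc : IsLocalMax ψ z := hzmax.isLocalMax (mem_of_superset (hU.mem_nhds hzU) hUK)
  exact (hloc.laplacian_nonpos (hψU z hzU)).not_gt (hΔ z hzU hz_pos)

end Laplacian

section HalfBall

variable {E : Type*} [NormedAddCommGroup E] [InnerProductSpace ℝ E]

theorem dist_reflection_orthogonal (K : Submodule ℝ E) [K.HasOrthogonalProjection] (x₀ y : E) :
    dist (x₀ + K.reflection (y - x₀)) x₀ = dist y x₀ := by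
  simp only [dist_eq_norm, add_sub_cancel_left, LinearIsometryEquiv.norm_map]

/-- Any coefficient larger than `finrank ℝ E` in place of `n + 1` makes the barrier strictly
superharmonic; `n + 1` gives `Δ halfBallBarrier = -2`. -/
def halfBallBarrier (x₀ e : E) (d : ℝ) (x : E) : ℝ :=
  ‖x - x₀‖ ^ 2 + (finrank ℝ E + 1) * ⟪x - x₀, e⟫_ℝ * (d - ⟪x - x₀, e⟫_ℝ)

theorem contDiff_halfBallBarrier (x₀ e : E) (d : ℝ) :
    ContDiff ℝ 2 (halfBallBarrier x₀ e d) := by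
  have hsub : ContDiff ℝ 2 fun x : E => x - x₀ := contDiff_id.sub contDiff_const
  have ht : ContDiff ℝ 2 fun x : E => ⟪x - x₀, e⟫_ℝ := hsub.inner ℝ contDiff_const
  exact ((contDiff_norm_sq ℝ).comp hsub).add
    ((contDiff_const.mul ht).mul (contDiff_const.sub ht))

theorem sq_dist_le_halfBallBarrier {x₀ e x : E} (he : ‖e‖ = 1) {d : ℝ} (hx : dist x x₀ ≤ d)
    (h₀ : 0 ≤ ⟪x - x₀, e⟫_ℝ) : dist x x₀ ^ 2 ≤ halfBallBarrier x₀ e d x := by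
  have hd : ⟪x - x₀, e⟫_ℝ ≤ d := by
    have := real_inner_le_norm (x - x₀) e
    rw [he, mul_one, ← dist_eq_norm] at this
    exact this.trans hx
  have := sub_nonneg.2 hd
  have : 0 ≤ (finrank ℝ E + 1 : ℝ) * ⟪x - x₀, e⟫_ℝ * (d - ⟪x - x₀, e⟫_ℝ) := by positivity
  rw [halfBallBarrier, ← dist_eq_norm]
  linarith

theorem halfBallBarrier_add_smul {x₀ e : E} (he : ‖e‖ = 1) (d s : ℝ) :
    halfBallBarrier x₀ e d (x₀ + s • e) = s * (s + (finrank ℝ E + 1) * (d - s)) := by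
  simp [halfBallBarrier, norm_smul, inner_smul_left, he]
  ring

theorem fderiv_fderiv_halfBallBarrier (x₀ e : E) (d : ℝ) (z b : E) :
    fderiv ℝ (fderiv ℝ (halfBallBarrier x₀ e d)) z b b
      = 2 * (‖b‖ ^ 2 - (finrank ℝ E + 1) * ⟪b, e⟫_ℝ ^ 2) := by
  rw [← (contDiff_halfBallBarrier x₀ e d).contDiffAt.deriv_deriv_comp_add_smul]
  have : (fun s : ℝ => halfBallBarrier x₀ e d (z + s • b)) = fun s =>
      halfBallBarrier x₀ e d z
        + (2 * ⟪z - x₀, b⟫_ℝ + (finrank ℝ E + 1) * ⟪b, e⟫_ℝ * (d - 2 * ⟪z - x₀, e⟫_ℝ)) * s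
        + (‖b‖ ^ 2 - (finrank ℝ E + 1) * ⟪b, e⟫_ℝ ^ 2) * s ^ 2 := by
    funext s
    have hsub : z + s • b - x₀ = (z - x₀) + s • b := by abel
    simp only [halfBallBarrier, hsub, norm_add_sq_real, norm_smul, inner_add_left,
      inner_smul_left, inner_smul_right, Real.norm_eq_abs, mul_pow, sq_abs, RCLike.conj_to_real]
    ring
  rw [this, deriv_deriv_quadratic]

variable [FiniteDimensional ℝ E]

theorem laplacian_halfBallBarrier (x₀ : E) {e : E} (he : ‖e‖ = 1) (d : ℝ) (z : E) :
    Δ (halfBallBarrier x₀ e d) z = -2 := by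
  let b := stdOrthonormalBasis ℝ E
  have hparseval : ∑ i, ⟪b i, e⟫_ℝ ^ 2 = 1 := by
    simpa [real_inner_comm e, ← sq, he] using b.sum_inner_mul_inner e e
  rw [laplacian_eq_sum_fderiv_fderiv b]
  simp [fderiv_fderiv_halfBallBarrier, b.orthonormal.1, ← Finset.mul_sum, Finset.sum_sub_distrib,
    hparseval]

theorem le_halfBallBarrier_of_laplacian_nonneg {w : E → ℝ} {x₀ e : E} (he : ‖e‖ = 1)
    {d R M : ℝ} (hd : 0 < d) (hdR : d < R) (hM₀ : 0 ≤ M) (hw : ContDiffOn ℝ 2 w (ball x₀ R))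
    (hΔ : ∀ x ∈ ball x₀ R, 0 < w x → 0 ≤ Δ w x)
    (hflat : ∀ x ∈ ball x₀ R, ⟪x - x₀, e⟫_ℝ = 0 → w x ≤ 0) (hM : ∀ x ∈ ball x₀ R, w x ≤ M)
    {x : E} (hx : dist x x₀ ≤ d) (ht : 0 ≤ ⟪x - x₀, e⟫_ℝ) :
    w x ≤ M / d ^ 2 * halfBallBarrier x₀ e d x := by
  set φ : E → ℝ := (M / d ^ 2) • halfBallBarrier x₀ e d
  have hball : closedBall x₀ d ⊆ ball x₀ R := closedBall_subset_ball hdR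
  have hw_at : ∀ y ∈ closedBall x₀ d, ContDiffAt ℝ 2 w y := fun y hy =>
    hw.contDiffAt (isOpen_ball.mem_nhds (hball hy))
  have hφ : ContDiff ℝ 2 φ := contDiff_const.smul (contDiff_halfBallBarrier x₀ e d)
  have hφ_ge : ∀ y, dist y x₀ ≤ d → 0 ≤ ⟪y - x₀, e⟫_ℝ → M / d ^ 2 * dist y x₀ ^ 2 ≤ φ y :=
    fun y hy hy₀ =>
      mul_le_mul_of_nonneg_left (sq_dist_le_halfBallBarrier he hy hy₀) (by positivity)
  have hK : IsCompact (closedBall x₀ d ∩ {y | 0 ≤ ⟪y - x₀, e⟫_ℝ}) :=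
    (isCompact_closedBall x₀ d).inter_right (isClosed_le continuous_const (by fun_prop))
  have hU : IsOpen (ball x₀ d ∩ {y | 0 < ⟪y - x₀, e⟫_ℝ}) :=
    isOpen_ball.inter (isOpen_lt continuous_const (by fun_prop))
  refine sub_nonpos.1 <| hK.nonpos_of_laplacian_pos (ψ := w - φ) hU
    (inter_subset_inter ball_subset_closedBall (ofPred_subset_ofPred.2 fun _ hy => hy.le))
    ((hw.continuousOn.mono (inter_subset_left.trans hball)).sub hφ.continuous.continuousOn)
    (fun y hy => (hw_at y (ball_subset_closedBall hy.1)).sub hφ.contDiffAt) ?_ ?_ x ⟨hx, ht⟩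
  · rintro y ⟨⟨hyd, hy₀ : 0 ≤ ⟪y - x₀, e⟫_ℝ⟩, hyU⟩
    rw [Pi.sub_apply, sub_nonpos]
    rcases hy₀.eq_or_lt with hy₀' | hy₀'
    · exact (hflat y (hball hyd) hy₀'.symm).trans ((hφ_ge y hyd hy₀).trans' (by positivity))
    · have hyd' : dist y x₀ = d := hyd.eq_of_not_lt fun h => hyU ⟨h, hy₀'⟩
      calc w y ≤ M := hM y (hball hyd)
        _ = M / d ^ 2 * dist y x₀ ^ 2 := by rw [hyd']; field_simp
        _ ≤ φ y := hφ_ge y hyd hy₀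
  · intro y hyU hpos
    have hyd := ball_subset_closedBall hyU.1
    have hw_pos : 0 < w y :=
      ((hφ_ge y hyd hyU.2.le).trans' (by positivity)).trans_lt (sub_pos.1 hpos)
    have hM_pos : 0 < M / d ^ 2 := div_pos (hw_pos.trans_le (hM y (hball hyd))) (by positivity)
    rw [(hw_at y hyd).laplacian_sub hφ.contDiffAt,
      laplacian_smul _ (contDiff_halfBallBarrier x₀ e d).contDiffAt,
      laplacian_halfBallBarrier x₀ he, smul_eq_mul]
    linarith [hΔ y (hball hyd) hw_pos]

theorem sub_comp_reflection_le_halfBallBarrier {v : E → ℝ} {F : ℝ → ℝ} (hF : Monotone F)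
    {x₀ e : E} (he : ‖e‖ = 1) {d R M : ℝ} (hd : 0 < d) (hdR : d < R)
    (hv : ContDiffOn ℝ 2 v (ball x₀ R)) (hΔ : ∀ x ∈ ball x₀ R, Δ v x = F (v x))
    (hM : ∀ x ∈ ball x₀ R, ∀ y ∈ ball x₀ R, v x - v y ≤ M) {x : E} (hx : dist x x₀ ≤ d)
    (ht : 0 ≤ ⟪x - x₀, e⟫_ℝ) :
    v x - v (x₀ + (ℝ ∙ e)ᗮ.reflection (x - x₀)) ≤ M / d ^ 2 * halfBallBarrier x₀ e d x := by
  set L := (ℝ ∙ e)ᗮ.reflection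
  have hLball : ∀ y ∈ ball x₀ R, x₀ + L (y - x₀) ∈ ball x₀ R := fun y hy => by
    rwa [mem_ball, dist_reflection_orthogonal]
  have hv_at : ∀ y ∈ ball x₀ R, ContDiffAt ℝ 2 v y := fun y hy =>
    hv.contDiffAt (isOpen_ball.mem_nhds hy)
  have hx₀ : x₀ ∈ ball x₀ R := mem_ball_self (hd.trans hdR)
  refine le_halfBallBarrier_of_laplacian_nonneg (w := fun y => v y - v (x₀ + L (y - x₀))) he hd
    hdR (by simpa using hM x₀ hx₀ x₀ hx₀) ?_ ?_ ?_ (fun y hy => hM _ hy _ (hLball y hy)) hx ht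
  · exact fun y hy =>
      ((hv_at y hy).sub ((hv_at _ (hLball y hy)).comp y (by fun_prop))).contDiffWithinAt
  · intro y hy hpos
    rw [laplacian_sub_comp_isometry_about L (hv_at y hy) (hv_at _ (hLball y hy)), hΔ y hy,
      hΔ _ (hLball y hy), sub_nonneg]
    exact hF (sub_pos.1 hpos).le
  · intro y _ hy₀
    rw [Submodule.reflection_mem_subspace_eq_self
      (Submodule.mem_orthogonal_singleton_iff_inner_left.2 hy₀), add_sub_cancel, sub_self]

theorem fderiv_apply_le_of_laplacian_eq_comp {v : E → ℝ} {F : ℝ → ℝ} (hF : Monotone F)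
    {x₀ e : E} (he : ‖e‖ = 1) {d R M : ℝ} (hd : 0 < d) (hdR : d < R)
    (hv : ContDiffOn ℝ 2 v (ball x₀ R)) (hΔ : ∀ x ∈ ball x₀ R, Δ v x = F (v x))
    (hM : ∀ x ∈ ball x₀ R, ∀ y ∈ ball x₀ R, v x - v y ≤ M) :
    fderiv ℝ v x₀ e ≤ (finrank ℝ E + 1) * M / (2 * d) := by
  have hdiff : DifferentiableAt ℝ v x₀ :=
    (hv.contDiffAt (isOpen_ball.mem_nhds (mem_ball_self (hd.trans hdR)))).differentiableAt
      two_ne_zero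
  set g : ℝ → ℝ := fun s => M / d ^ 2 * (s + (finrank ℝ E + 1) * (d - s))
  have hderiv : HasDerivAt (fun s : ℝ => v (x₀ + s • e) - v (x₀ + s • -e))
      (2 * fderiv ℝ v x₀ e) 0 := by
    simpa [two_mul] using (hasDerivAt_comp_add_smul hdiff e).fun_sub
      (hasDerivAt_comp_add_smul hdiff (-e))
  have hle : ∀ᶠ s in 𝓝[>] 0, v (x₀ + s • e) - v (x₀ + s • -e) ≤ s * g s := by
    filter_upwards [Ioo_mem_nhdsGT hd] with s hs
    have := sub_comp_reflection_le_halfBallBarrier hF he hd hdR hv hΔ hM (x := x₀ + s • e)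
      (by simp [dist_eq_norm, norm_smul, he, abs_of_pos hs.1, hs.2.le])
      (by simp [inner_smul_left, he, hs.1.le])
    rw [add_sub_cancel_left, map_smul, Submodule.reflection_orthogonalComplement_singleton_eq_neg,
      halfBallBarrier_add_smul he] at this
    linarith
  have hg : Tendsto g (𝓝[>] 0) (𝓝 (g 0)) :=
    ((Continuous.tendsto (by fun_prop) 0).mono_left nhdsWithin_le_nhds)
  have hg0 : g 0 = (finrank ℝ E + 1) * M / d := by
    simp only [g]
    field_simp
    ring
  have := hderiv.le_of_le_mul (by simp) hle hg
  rw [hg0, le_div_iff₀ hd] at this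
  rw [le_div_iff₀ (by positivity)]
  linarith

theorem norm_gradient_le_of_laplacian_eq_comp {v : E → ℝ} {F : ℝ → ℝ} (hF : Monotone F)
    {x₀ : E} {d R M : ℝ} (hd : 0 < d) (hdR : d < R)
    (hv : ContDiffOn ℝ 2 v (ball x₀ R)) (hΔ : ∀ x ∈ ball x₀ R, Δ v x = F (v x))
    (hM : ∀ x ∈ ball x₀ R, ∀ y ∈ ball x₀ R, v x - v y ≤ M) :
    ‖gradient v x₀‖ ≤ (finrank ℝ E + 1) * M / (2 * d) := by
  by_cases h0 : gradient v x₀ = 0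
  · have hx₀ := mem_ball_self (x := x₀) (hd.trans hdR)
    have hM₀ : 0 ≤ M := by simpa using hM x₀ hx₀ x₀ hx₀
    rw [h0, norm_zero]
    positivity
  · have he : ‖‖gradient v x₀‖⁻¹ • gradient v x₀‖ = 1 := norm_smul_inv_norm h0
    have := fderiv_apply_le_of_laplacian_eq_comp hF he hd hdR hv hΔ hM
    rwa [← inner_gradient_left, real_inner_smul_right, real_inner_self_eq_norm_sq, pow_two,
      inv_mul_cancel_left₀ (norm_ne_zero_iff.2 h0)] at this

end HalfBall

theorem lap_eq_laplacian (f : E2 → ℝ) (x : E2) : lap f x = Δ f x := by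
  rw [laplacian_eq_sum_fderiv_fderiv (EuclideanSpace.basisFun (Fin 2) ℝ)]
  simp [lap]

theorem stmt_18 :
    ∃ C : ℝ, 0 < C ∧ ∀ (Ω : Set E2), IsOpen Ω → Bornology.IsBounded Ω →
      ∀ (ε R : ℝ) (x₀ : E2) (u : E2 → ℝ), 0 < ε → ε < 1 → 0 < R →
        Metric.ball x₀ R ⊆ Ω →
        ContDiffOn ℝ 2 u (Metric.ball x₀ R) →
        (∀ x ∈ Metric.ball x₀ R, -lap u x = 1 / (4 * ε ^ 2) * (1 - u x)) →
        (∀ x ∈ Metric.ball x₀ R, 0 ≤ u x ∧ u x ≤ 1) →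
        ‖gradient u x₀‖ ≤ C * (1 / ε + 1 / R) := by
  refine ⟨3, by norm_num, fun Ω _ _ ε R x₀ u hε _ hR _ hu hpde hbd => ?_⟩
  set c := 1 / (4 * ε ^ 2)
  have hmono : Monotone fun t => c * (t - 1) := fun a b hab =>
    mul_le_mul_of_nonneg_left (sub_le_sub_right hab 1) (by positivity)
  have hΔ : ∀ x ∈ ball x₀ R, Δ u x = c * (u x - 1) := fun x hx => by
    rw [← lap_eq_laplacian]
    linarith [hpde x hx]
  have hosc : ∀ x ∈ ball x₀ R, ∀ y ∈ ball x₀ R, u x - u y ≤ 1 := fun x hx y hy => by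
    linarith [(hbd x hx).2, (hbd y hy).1]
  have hgrad := norm_gradient_le_of_laplacian_eq_comp hmono (half_pos hR) (half_lt_self hR) hu
    hΔ hosc
  rw [finrank_euclideanSpace_fin] at hgrad
  calc ‖gradient u x₀‖ ≤ (2 + 1) * 1 / (2 * (R / 2)) := by exact_mod_cast hgrad
    _ = 3 * (1 / R) := by field_simp; norm_num
    _ ≤ 3 * (1 / ε + 1 / R) := by gcongr; exact le_add_of_nonneg_left (by positivity)
end
end
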